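/- arXiv:2309.01423 — 2 statements merged into one kernel-verified Lean document; each statement's English description precedes it below -/
import Mathlib

section
/- (Gesztesy–Zinchenko theory for right half-lattice rotated CMV operators.) Let z ∈ ℂ with z ≠ 0 and K ∈ ℤ. Let α : ℤ → ℂ with |α_{K+1}| = 1 and |αₙ| < 1 for all n ≥ K+2, and ρ : ℤ → ℂ with |αₙ|² + |ρₙ|² = 1 for n ≥ K+2 (hence ρₙ ≠ 0 for n ≥ K+2). Define the half-lattice operators 𝕄^∠_{K+} and 𝕃^∠_{K+} on sequences u : {n ∈ ℤ : n ≥ K+1} → ℂ as follows. If K is even: 𝕄^∠_{K+} is the direct sum of the blocks Θ^∠_{K+2j} acting on the coordinate pairs (K+2j−1, K+2j), j ≥ 1, and 𝕃^∠_{K+} is the 1×1 block (−α_{K+1}) at coordinate K+1 followed by the blocks Θ^∠_{K+2j+1} acting on (K+2j, K+2j+1), j ≥ 1. If K is odd: 𝕄^∠_{K+} is the 1×1 block (−α_{K+1}) at coordinate K+1 followed by the blocks Θ^∠_{K+2j+1} (of even index) acting on (K+2j, K+2j+1), j ≥ 1; and 𝕃^∠_{K+} is the direct sum of the blocks Θ^∠_{K+2j}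 acting on (K+2j−1, K+2j), j ≥ 1. Then for sequences f, g : {n ≥ K+1} → ℂ the following are equivalent: (3) for all n ≥ K+1, (𝕄^∠_{K+} f)ₙ = z·gₙ and (𝕃^∠_{K+} g)ₙ = fₙ; (6) for all n ≥ K+1, (f_{n+1}, g_{n+1})ᵀ = T^∠_{n+1}(z)·(fₙ, gₙ)ᵀ, together with the boundary condition f_{K+1} = −α_{K+1}·g_{K+1} if K is even, and f_{K+1} = −conj(α_{K+1})·z·g_{K+1} if K is odd. Here T^∠ₘ(z) = ρₘ⁻¹·[[−conj(αₘ), z], [z⁻¹, −αₘ]] if m is even and T^∠ₘ(z) = ρₘ⁻¹·[[−αₘ, 1], [1, −conj(αₘ)]] if m is odd. (In particular, when α_{K+1} = −1 the boundary conditions read f_{K+1} = g_{K+1} for K even and f_{K+1} = z·g_{K+1} for K odd.) -/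
open ComplexConjugate

private lemma mulVec2 (c a b d e x y : ℂ) :
    (c • !![a,b;d,e]).mulVec ![x,y] = ![c*(a*x+b*y), c*(d*x+e*y)] := by
  funext i; fin_cases i <;> simp [Matrix.mulVec, dotProduct, Fin.sum_univ_two] <;> ring

private lemma vecPair (a b c d : ℂ) : (![a,b] = ![c,d]) ↔ (a = c ∧ b = d) := by
  constructor
  · intro h; exact ⟨congrFun h 0, congrFun h 1⟩
  · rintro ⟨h1, h2⟩; rw [h1, h2]

private lemma stepEven (z ρ' α' a a' b b' : ℂ) (hz : z ≠ 0) (hρ : ρ' ≠ 0)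
    (h1 : α' * conj α' + ρ' * conj ρ' = 1) :
    (conj α' * a + ρ' * a' = z * b ∧ conj ρ' * a - α' * a' = z * b') ↔
    ![a', b'] = ((ρ')⁻¹ • !![-(conj α'), z; z⁻¹, -α']).mulVec ![a, b] := by
  have hz1 : z * z⁻¹ = 1 := mul_inv_cancel₀ hz
  rw [mulVec2, vecPair, eq_inv_mul_iff_mul_eq₀ hρ, eq_inv_mul_iff_mul_eq₀ hρ]
  constructor
  · rintro ⟨e1, e2⟩
    refine ⟨by linear_combination e1, ?_⟩
    apply mul_left_cancel₀ hz
    linear_combination (-ρ') * e2 - α' * e1 + a * h1 - a * hz1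
  · rintro ⟨k1, k2⟩
    refine ⟨by linear_combination k1, ?_⟩
    apply mul_left_cancel₀ hρ
    linear_combination a * h1 - α' * k1 - z * k2 - a * hz1

private lemma stepOdd (ρ' α' a a' b b' : ℂ) (hρ : ρ' ≠ 0)
    (h1 : α' * conj α' + ρ' * conj ρ' = 1) :
    (conj α' * b + ρ' * b' = a ∧ conj ρ' * b - α' * b' = a') ↔
    ![a', b'] = ((ρ')⁻¹ • !![-α', 1; 1, -(conj α')]).mulVec ![a, b] := by
  rw [mulVec2, vecPair, eq_inv_mul_iff_mul_eq₀ hρ, eq_inv_mul_iff_mul_eq₀ hρ]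
  constructor
  · rintro ⟨e1, e2⟩
    exact ⟨by linear_combination (-ρ') * e2 - α' * e1 + b * h1, by linear_combination e1⟩
  · rintro ⟨k2, k1⟩
    refine ⟨by linear_combination k1, ?_⟩
    apply mul_left_cancel₀ hρ
    linear_combination b * h1 - α' * k1 - k2

/-- **Gesztesy–Zinchenko theory for right half-lattice rotated CMV operators.**
Let `z ≠ 0`, `K ∈ ℤ`, `|α_{K+1}| = 1`, `|αₙ| < 1` and `|αₙ|² + |ρₙ|² = 1` for `n ≥ K+2`.
With the half-lattice operators `𝕄^∠_{K+}`, `𝕃^∠_{K+}` (block structure according to the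
parity of `K`, with the degenerate `1×1` block `(-α_{K+1})` at coordinate `K+1`), the
statement "`𝕄^∠_{K+} f = z·g` and `𝕃^∠_{K+} g = f` on `{n ≥ K+1}`" is equivalent to the
transfer-matrix recursion `(f_{n+1}, g_{n+1})ᵀ = T^∠_{n+1}(z)·(fₙ, gₙ)ᵀ` for `n ≥ K+1`
together with the boundary condition `f_{K+1} = -α_{K+1}·g_{K+1}` (`K` even) resp.
`f_{K+1} = -conj(α_{K+1})·z·g_{K+1}` (`K` odd). -/
theorem rotated_half_lattice_right_gesztesy_zinchenko
    (z : ℂ) (hz : z ≠ 0) (K : ℤ)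
    (α ρ : ℤ → ℂ)
    (hαK : ‖α (K + 1)‖ = 1)
    (hα : ∀ n, K + 2 ≤ n → ‖α n‖ < 1)
    (hρ : ∀ n, K + 2 ≤ n → ‖α n‖ ^ 2 + ‖ρ n‖ ^ 2 = 1)
    (M L : (ℤ → ℂ) → ℤ → ℂ)
    -- `K` even: `𝕄^∠_{K+} = ⊕_{j≥1} Θ^∠_{K+2j}` on the pairs `(K+2j-1, K+2j)`
    (hMeven : Even K → ∀ (u : ℤ → ℂ) (j : ℤ), 1 ≤ j →
      M u (K + 2 * j - 1)
          = conj (α (K + 2 * j)) * u (K + 2 * j - 1) + ρ (K + 2 * j) * u (K + 2 * j)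
      ∧ M u (K + 2 * j)
          = conj (ρ (K + 2 * j)) * u (K + 2 * j - 1) - α (K + 2 * j) * u (K + 2 * j))
    -- `K` even: `𝕃^∠_{K+} = (-α_{K+1}) ⊕ ⊕_{j≥1} Θ^∠_{K+2j+1}` on `(K+2j, K+2j+1)`
    (hLeven : Even K →
      (∀ u : ℤ → ℂ, L u (K + 1) = -α (K + 1) * u (K + 1))
      ∧ ∀ (u : ℤ → ℂ) (j : ℤ), 1 ≤ j →
        L u (K + 2 * j)
            = conj (α (K + 2 * j + 1)) * u (K + 2 * j) + ρ (K + 2 * j + 1) * u (K + 2 * j + 1)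
        ∧ L u (K + 2 * j + 1)
            = conj (ρ (K + 2 * j + 1)) * u (K + 2 * j) - α (K + 2 * j + 1) * u (K + 2 * j + 1))
    -- `K` odd: `𝕄^∠_{K+} = (-α_{K+1}) ⊕ ⊕_{j≥1} Θ^∠_{K+2j+1}` on `(K+2j, K+2j+1)`
    (hModd : ¬ Even K →
      (∀ u : ℤ → ℂ, M u (K + 1) = -α (K + 1) * u (K + 1))
      ∧ ∀ (u : ℤ → ℂ) (j : ℤ), 1 ≤ j →
        M u (K + 2 * j)
            = conj (α (K + 2 * j + 1)) * u (K + 2 * j) + ρ (K + 2 * j + 1) * u (K + 2 * j + 1)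
        ∧ M u (K + 2 * j + 1)
            = conj (ρ (K + 2 * j + 1)) * u (K + 2 * j) - α (K + 2 * j + 1) * u (K + 2 * j + 1))
    -- `K` odd: `𝕃^∠_{K+} = ⊕_{j≥1} Θ^∠_{K+2j}` on the pairs `(K+2j-1, K+2j)`
    (hLodd : ¬ Even K → ∀ (u : ℤ → ℂ) (j : ℤ), 1 ≤ j →
      L u (K + 2 * j - 1)
          = conj (α (K + 2 * j)) * u (K + 2 * j - 1) + ρ (K + 2 * j) * u (K + 2 * j)
      ∧ L u (K + 2 * j)
          = conj (ρ (K + 2 * j)) * u (K + 2 * j - 1) - α (K + 2 * j) * u (K + 2 * j))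
    -- the rotated Gesztesy–Zinchenko transfer matrix
    (T : ℤ → Matrix (Fin 2) (Fin 2) ℂ)
    (hT : ∀ m : ℤ, T m =
      if Even m then (ρ m)⁻¹ • !![-(conj (α m)), z; z⁻¹, -(α m)]
      else (ρ m)⁻¹ • !![-(α m), 1; 1, -(conj (α m))])
    (f g : ℤ → ℂ) :
    ((∀ n : ℤ, K + 1 ≤ n → M f n = z * g n) ∧ (∀ n : ℤ, K + 1 ≤ n → L g n = f n))
    ↔ ((∀ n : ℤ, K + 1 ≤ n → ![f (n + 1), g (n + 1)] = (T (n + 1)).mulVec ![f n, g n])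
      ∧ (Even K → f (K + 1) = -α (K + 1) * g (K + 1))
      ∧ (¬ Even K → f (K + 1) = -conj (α (K + 1)) * z * g (K + 1))) := by
  -- nonvanishing of ρ on the strict half lattice
  have hρne : ∀ m : ℤ, K + 2 ≤ m → ρ m ≠ 0 := by
    intro m hm hc
    have h1 := hρ m hm
    have h2 := hα m hm
    rw [hc] at h1
    simp only [map_zero, norm_zero] at h1
    nlinarith [norm_nonneg (α m)]
  -- the unitarity relation in complex form
  have hunit : ∀ m : ℤ, K + 2 ≤ m → α m * conj (α m) + ρ m * conj (ρ m) = 1 := by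
    intro m hm
    rw [Complex.mul_conj, Complex.mul_conj, ← Complex.ofReal_add, ← Complex.sq_norm,
      ← Complex.sq_norm, hρ m hm, Complex.ofReal_one]
  have hαKunit : α (K + 1) * conj (α (K + 1)) = 1 := by
    have h : Complex.normSq (α (K + 1)) = 1 := by
      rw [← Complex.sq_norm, hαK]; norm_num
    rw [Complex.mul_conj, h, Complex.ofReal_one]
  -- block equations for M at even indices
  have hMblk : ∀ m : ℤ, Even m → K + 2 ≤ m → ∀ u : ℤ → ℂ,
      M u (m - 1) = conj (α m) * u (m - 1) + ρ m * u m ∧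
      M u m = conj (ρ m) * u (m - 1) - α m * u m := by
    intro m hm hm2 u
    obtain ⟨c, hc⟩ := hm
    by_cases hK : Even K
    · obtain ⟨d, hd⟩ := hK
      have key := hMeven ⟨d, hd⟩ u (c - d) (by omega)
      have h1 : K + 2 * (c - d) = m := by omega
      rwa [h1] at key
    · obtain ⟨d, hd⟩ := Int.not_even_iff_odd.mp hK
      have key := (hModd hK).2 u (c - d - 1) (by omega)
      have h1 : K + 2 * (c - d - 1) = m - 1 := by omega
      have h2 : m - 1 + 1 = m := by ring
      rwa [h1, h2] at key
  -- block equations for L at odd indices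
  have hLblk : ∀ m : ℤ, ¬ Even m → K + 2 ≤ m → ∀ u : ℤ → ℂ,
      L u (m - 1) = conj (α m) * u (m - 1) + ρ m * u m ∧
      L u m = conj (ρ m) * u (m - 1) - α m * u m := by
    intro m hm hm2 u
    obtain ⟨c, hc⟩ := Int.not_even_iff_odd.mp hm
    by_cases hK : Even K
    · obtain ⟨d, hd⟩ := hK
      have key := (hLeven ⟨d, hd⟩).2 u (c - d) (by omega)
      have h1 : K + 2 * (c - d) = m - 1 := by omega
      have h2 : m - 1 + 1 = m := by ring
      rwa [h1, h2] at key
    · obtain ⟨d, hd⟩ := Int.not_even_iff_odd.mp hK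
      have key := hLodd hK u (c - d) (by omega)
      have h1 : K + 2 * (c - d) = m := by omega
      rwa [h1] at key
  -- the key step equivalences
  have keyM : ∀ m : ℤ, Even m → K + 2 ≤ m →
      ((M f (m - 1) = z * g (m - 1) ∧ M f m = z * g m) ↔
        ![f m, g m] = (T m).mulVec ![f (m - 1), g (m - 1)]) := by
    intro m hm hm2
    obtain ⟨e1, e2⟩ := hMblk m hm hm2 f
    rw [hT m, if_pos hm, e1, e2]
    exact stepEven z (ρ m) (α m) (f (m - 1)) (f m) (g (m - 1)) (g m) hz
      (hρne m hm2) (hunit m hm2)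
  have keyL : ∀ m : ℤ, ¬ Even m → K + 2 ≤ m →
      ((L g (m - 1) = f (m - 1) ∧ L g m = f m) ↔
        ![f m, g m] = (T m).mulVec ![f (m - 1), g (m - 1)]) := by
    intro m hm hm2
    obtain ⟨e1, e2⟩ := hLblk m hm hm2 g
    rw [hT m, if_neg hm, e1, e2]
    exact stepOdd (ρ m) (α m) (f (m - 1)) (f m) (g (m - 1)) (g m)
      (hρne m hm2) (hunit m hm2)
  constructor
  · rintro ⟨h1, h2⟩
    refine ⟨?_, ?_, ?_⟩
    · intro n hn
      by_cases hm : Even (n + 1)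
      · have key := keyM (n + 1) hm (by omega)
        rw [show n + 1 - 1 = n from by ring] at key
        exact key.mp ⟨h1 n hn, h1 (n + 1) (by omega)⟩
      · have key := keyL (n + 1) hm (by omega)
        rw [show n + 1 - 1 = n from by ring] at key
        exact key.mp ⟨h2 n hn, h2 (n + 1) (by omega)⟩
    · intro hK
      rw [← h2 (K + 1) le_rfl]
      exact (hLeven hK).1 g
    · intro hK
      have e := (hModd hK).1 f
      have e2 := h1 (K + 1) le_rfl
      have key : -α (K + 1) * f (K + 1) = z * g (K + 1) := by rw [← e]; exact e2
      linear_combination (-(conj (α (K + 1)))) * key - f (K + 1) * hαKunit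
  · rintro ⟨hT6, hBCe, hBCo⟩
    constructor
    · intro n hn
      by_cases hm : Even n
      · by_cases hne : n = K + 1
        · have hK : ¬ Even K := by
            rintro ⟨d, hd⟩
            obtain ⟨c, hc⟩ := hm
            omega
          have hb := hBCo hK
          rw [hne] at hm ⊢
          rw [(hModd hK).1 f]
          linear_combination (-α (K + 1)) * hb + z * g (K + 1) * hαKunit
        · have hn2 : K + 2 ≤ n := by omega
          have key := keyM n hm hn2
          have t := hT6 (n - 1) (by omega)
          rw [show n - 1 + 1 = n from by ring] at t
          exact (key.mpr t).2
      · have hm1 : Even (n + 1) := Int.even_add_one.mpr hm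
        have key := keyM (n + 1) hm1 (by omega)
        rw [show n + 1 - 1 = n from by ring] at key
        exact (key.mpr (hT6 n hn)).1
    · intro n hn
      by_cases hm : Even n
      · have hm1 : ¬ Even (n + 1) := by
          rw [Int.even_add_one]; exact not_not_intro hm
        have key := keyL (n + 1) hm1 (by omega)
        rw [show n + 1 - 1 = n from by ring] at key
        exact (key.mpr (hT6 n hn)).1
      · by_cases hne : n = K + 1
        · have hK : Even K := by
            by_contra hK
            obtain ⟨d, hd⟩ := Int.not_even_iff_odd.mp hK
            obtain ⟨c, hc⟩ := Int.not_even_iff_odd.mp hm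
            omega
          rw [hne, (hLeven hK).1 g]
          exact (hBCe hK).symm
        · have hn2 : K + 2 ≤ n := by omega
          have key := keyL n hm hn2
          have t := hT6 (n - 1) (by omega)
          rw [show n - 1 + 1 = n from by ring] at t
          exact (key.mpr t).2
end

section
/- (Gesztesy–Zinchenko theory for left half-lattice rotated CMV operators.) Let z ∈ ℂ with z ≠ 0 and K ∈ ℤ. Let α : ℤ → ℂ with |α_{K+1}| = 1 and |αₙ| < 1 for all n ≤ K, and ρ : ℤ → ℂ with |αₙ|² + |ρₙ|² = 1 for n ≤ K (hence ρₙ ≠ 0 for n ≤ K). Define the half-lattice operators 𝕄^∠_{K−} and 𝕃^∠_{K−} on sequences u : {n ∈ ℤ : n ≤ K} → ℂ as follows. If K is even: 𝕄^∠_{K−} is the direct sum of the blocks Θ^∠_{2k} acting on the coordinate pairs (2k−1, 2k) for 2k ≤ K, and 𝕃^∠_{K−} is the direct sum of the blocks Θ^∠_{2k+1} acting on (2k, 2k+1) for 2k+1 ≤ K−1 together with the 1×1 block (conj(α_{K+1})) at coordinate K. If K is odd: 𝕄^∠_{K−} is the direct sum of the blocks Θ^∠_{2k} acting on (2k−1,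 2k) for 2k ≤ K−1 together with the 1×1 block (conj(α_{K+1})) at coordinate K, and 𝕃^∠_{K−} is the direct sum of the blocks Θ^∠_{2k+1} acting on (2k, 2k+1) for 2k+1 ≤ K. Then for sequences f, g : {n ≤ K} → ℂ the following are equivalent: (3) for all n ≤ K, (𝕄^∠_{K−} f)ₙ = z·gₙ and (𝕃^∠_{K−} g)ₙ = fₙ; (6) for all n ≤ K, (f_{n−1}, g_{n−1})ᵀ = (T^∠ₙ(z))⁻¹·(fₙ, gₙ)ᵀ, together with the boundary condition f_K = conj(α_{K+1})·g_K if K is even, and f_K = α_{K+1}·z·g_K if K is odd. Here (T^∠ₘ(z))⁻¹ = conj(ρₘ)⁻¹·[[αₘ, z], [z⁻¹, conj(αₘ)]] if m is even and (T^∠ₘ(z))⁻¹ = conj(ρₘ)⁻¹·[[conj(αₘ), 1], [1, αₘ]] if m is odd; in particular det T^∠ₘ(z) = −conj(ρₘ), so the inverse transfer matrices carry conj(ρₘ) where the forward ones carry ρₘ. (When α_{K+1} = −1 the boundary conditions read f_K = −g_K for K even and f_K = −z·g_K for K odd.) -/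
open ComplexConjugate

lemma vecmul2_aux (a b c d x y u v e : ℂ) :
    ![u, v] = (e • !![a,b;c,d]).mulVec ![x,y] ↔ (u = e*a*x + e*b*y ∧ v = e*c*x + e*d*y) := by
  rw [funext_iff, Fin.forall_fin_two]
  simp [Matrix.mulVec, dotProduct, Fin.sum_univ_two]

/-- **Gesztesy–Zinchenko theory for left half-lattice rotated CMV operators.**
Let `z ≠ 0`, `K ∈ ℤ`, `|α_{K+1}| = 1`, `|αₙ| < 1` and `|αₙ|² + |ρₙ|² = 1` for `n ≤ K`.
With the half-lattice operators `𝕄^∠_{K-}`, `𝕃^∠_{K-}` (block structure according to the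
parity of `K`, with the degenerate `1×1` block `(conj α_{K+1})` at coordinate `K`), the
statement "`𝕄^∠_{K-} f = z·g` and `𝕃^∠_{K-} g = f` on `{n ≤ K}`" is equivalent to the
inverse-transfer-matrix recursion `(f_{n-1}, g_{n-1})ᵀ = (T^∠ₙ(z))⁻¹·(fₙ, gₙ)ᵀ` for
`n ≤ K` together with the boundary condition `f_K = conj(α_{K+1})·g_K` (`K` even) resp.
`f_K = α_{K+1}·z·g_K` (`K` odd); the inverse transfer matrices carry `conj ρₘ` where the
forward ones carry `ρₘ`. -/
theorem rotated_half_lattice_left_gesztesy_zinchenko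
    (z : ℂ) (hz : z ≠ 0) (K : ℤ)
    (α ρ : ℤ → ℂ)
    (hαK : ‖α (K + 1)‖ = 1)
    (hα : ∀ n, n ≤ K → ‖α n‖ < 1)
    (hρ : ∀ n, n ≤ K → ‖α n‖ ^ 2 + ‖ρ n‖ ^ 2 = 1)
    (M L : (ℤ → ℂ) → ℤ → ℂ)
    -- `K` even: `𝕄^∠_{K-} = ⊕_{2k ≤ K} Θ^∠_{2k}` on the pairs `(2k-1, 2k)`
    (hMeven : Even K → ∀ (u : ℤ → ℂ) (k : ℤ), 2 * k ≤ K →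
      M u (2 * k - 1) = conj (α (2 * k)) * u (2 * k - 1) + ρ (2 * k) * u (2 * k)
      ∧ M u (2 * k) = conj (ρ (2 * k)) * u (2 * k - 1) - α (2 * k) * u (2 * k))
    -- `K` even: `𝕃^∠_{K-} = (⊕_{2k+1 ≤ K-1} Θ^∠_{2k+1}) ⊕ (conj α_{K+1})` at coordinate `K`
    (hLeven : Even K →
      (∀ (u : ℤ → ℂ) (k : ℤ), 2 * k + 1 ≤ K - 1 →
        L u (2 * k) = conj (α (2 * k + 1)) * u (2 * k) + ρ (2 * k + 1) * u (2 * k + 1)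
        ∧ L u (2 * k + 1)
            = conj (ρ (2 * k + 1)) * u (2 * k) - α (2 * k + 1) * u (2 * k + 1))
      ∧ ∀ u : ℤ → ℂ, L u K = conj (α (K + 1)) * u K)
    -- `K` odd: `𝕄^∠_{K-} = (⊕_{2k ≤ K-1} Θ^∠_{2k}) ⊕ (conj α_{K+1})` at coordinate `K`
    (hModd : ¬ Even K →
      (∀ (u : ℤ → ℂ) (k : ℤ), 2 * k ≤ K - 1 →
        M u (2 * k - 1) = conj (α (2 * k)) * u (2 * k - 1) + ρ (2 * k) * u (2 * k)
        ∧ M u (2 * k) = conj (ρ (2 * k)) * u (2 * k - 1) - α (2 * k) * u (2 * k))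
      ∧ ∀ u : ℤ → ℂ, M u K = conj (α (K + 1)) * u K)
    -- `K` odd: `𝕃^∠_{K-} = ⊕_{2k+1 ≤ K} Θ^∠_{2k+1}` on the pairs `(2k, 2k+1)`
    (hLodd : ¬ Even K → ∀ (u : ℤ → ℂ) (k : ℤ), 2 * k + 1 ≤ K →
      L u (2 * k) = conj (α (2 * k + 1)) * u (2 * k) + ρ (2 * k + 1) * u (2 * k + 1)
      ∧ L u (2 * k + 1) = conj (ρ (2 * k + 1)) * u (2 * k) - α (2 * k + 1) * u (2 * k + 1))
    -- the inverse rotated Gesztesy–Zinchenko transfer matrix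
    (Tinv : ℤ → Matrix (Fin 2) (Fin 2) ℂ)
    (hTinv : ∀ m : ℤ, Tinv m =
      if Even m then (conj (ρ m))⁻¹ • !![α m, z; z⁻¹, conj (α m)]
      else (conj (ρ m))⁻¹ • !![conj (α m), 1; 1, α m])
    (f g : ℤ → ℂ) :
    ((∀ n : ℤ, n ≤ K → M f n = z * g n) ∧ (∀ n : ℤ, n ≤ K → L g n = f n))
    ↔ ((∀ n : ℤ, n ≤ K → ![f (n - 1), g (n - 1)] = (Tinv n).mulVec ![f n, g n])
      ∧ (Even K → f K = conj (α (K + 1)) * g K)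
      ∧ (¬ Even K → f K = α (K + 1) * z * g K)) := by
  -- basic facts
  have hc : ∀ n : ℤ, n ≤ K → conj (ρ n) ≠ 0 := by
    intro n hn h0
    have hr : ρ n = 0 := by simpa using congrArg conj h0
    have h := hρ n hn
    rw [hr] at h; simp only [norm_zero] at h; norm_num at h
    rcases h with h | h
    · exact absurd h (ne_of_lt (hα n hn))
    · nlinarith [norm_nonneg (α n)]
  have huni : ∀ n : ℤ, n ≤ K → α n * conj (α n) + ρ n * conj (ρ n) = 1 := by
    intro n hn
    rw [Complex.mul_conj, Complex.mul_conj, ← Complex.sq_norm, ← Complex.sq_norm]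
    norm_cast
    exact hρ n hn
  have hαu : α (K+1) * conj (α (K+1)) = 1 := by
    rw [Complex.mul_conj, ← Complex.sq_norm, hαK]; norm_num
  -- the blocks of M at an even index m ≤ K
  have hblkM : ∀ m : ℤ, Even m → m ≤ K →
      M f (m-1) = conj (α m) * f (m-1) + ρ m * f m
      ∧ M f m = conj (ρ m) * f (m-1) - α m * f m := by
    intro m hm hmK
    obtain ⟨k, hk⟩ := hm
    by_cases hK : Even K
    · have h := hMeven hK f k (by omega)
      rw [show (2*k : ℤ) = m from by omega] at h
      exact h
    · obtain ⟨j, hj⟩ := Int.not_even_iff_odd.mp hK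
      have h := (hModd hK).1 f k (by omega)
      rw [show (2*k : ℤ) = m from by omega] at h
      exact h
  -- the blocks of L at an odd index m ≤ K
  have hblkL : ∀ m : ℤ, Odd m → m ≤ K →
      L g (m-1) = conj (α m) * g (m-1) + ρ m * g m
      ∧ L g m = conj (ρ m) * g (m-1) - α m * g m := by
    intro m hm hmK
    obtain ⟨k, hk⟩ := hm
    by_cases hK : Even K
    · obtain ⟨j, hj⟩ := id hK
      have h := (hLeven hK).1 g k (by omega)
      rw [show (2*k+1 : ℤ) = m from by omega, show (2*k : ℤ) = m - 1 from by omega] at h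
      exact h
    · have h := hLodd hK g k (by omega)
      rw [show (2*k+1 : ℤ) = m from by omega, show (2*k : ℤ) = m - 1 from by omega] at h
      exact h
  -- component form of the transfer recursion
  have hrecE : ∀ n : ℤ, Even n →
      ((![f (n-1), g (n-1)] = (Tinv n).mulVec ![f n, g n]) ↔
        (f (n-1) = (conj (ρ n))⁻¹ * α n * f n + (conj (ρ n))⁻¹ * z * g n
         ∧ g (n-1) = (conj (ρ n))⁻¹ * z⁻¹ * f n + (conj (ρ n))⁻¹ * conj (α n) * g n)) := by
    intro n hn; rw [hTinv n, if_pos hn]; exact vecmul2_aux _ _ _ _ _ _ _ _ _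
  have hrecO : ∀ n : ℤ, ¬ Even n →
      ((![f (n-1), g (n-1)] = (Tinv n).mulVec ![f n, g n]) ↔
        (f (n-1) = (conj (ρ n))⁻¹ * conj (α n) * f n + (conj (ρ n))⁻¹ * 1 * g n
         ∧ g (n-1) = (conj (ρ n))⁻¹ * 1 * f n + (conj (ρ n))⁻¹ * α n * g n)) := by
    intro n hn; rw [hTinv n, if_neg hn]; exact vecmul2_aux _ _ _ _ _ _ _ _ _
  constructor
  · rintro ⟨hM, hL⟩
    refine ⟨?_, ?_, ?_⟩
    · -- transfer recursion
      intro n hn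
      by_cases hne : Even n
      · have hb := hblkM n hne hn
        have e1 : conj (α n) * f (n-1) + ρ n * f n = z * g (n-1) := by
          rw [← hb.1]; exact hM (n-1) (by omega)
        have e2 : conj (ρ n) * f (n-1) - α n * f n = z * g n := by
          rw [← hb.2]; exact hM n hn
        rw [hrecE n hne]
        have hcn := hc n hn
        have hu := huni n hn
        constructor
        · field_simp
          linear_combination e2
        · field_simp
          linear_combination (-(conj (ρ n))) * e1 + conj (α n) * e2
            + f n * hu
      · have hb := hblkL n (Int.not_even_iff_odd.mp hne) hn
        have e1 : conj (α n) * g (n-1) + ρ n * g n = f (n-1) := by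
          rw [← hb.1]; exact hL (n-1) (by omega)
        have e2 : conj (ρ n) * g (n-1) - α n * g n = f n := by
          rw [← hb.2]; exact hL n hn
        rw [hrecO n hne]
        have hcn := hc n hn
        have hu := huni n hn
        constructor
        · field_simp
          linear_combination (-(conj (ρ n))) * e1 + conj (α n) * e2 + g n * hu
        · field_simp
          linear_combination e2
    · -- boundary, K even
      intro hK
      have h := (hLeven hK).2 g
      have h2 := hL K le_rfl
      rw [h] at h2
      exact h2.symm
    · -- boundary, K odd
      intro hK
      have h := (hModd hK).2 f
      have h2 := hM K le_rfl
      rw [h] at h2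
      linear_combination α (K+1) * h2 - f K * hαu
  · rintro ⟨hrec, hbE, hbO⟩
    constructor
    · -- M f n = z * g n
      intro n hn
      by_cases hne : Even n
      · have hb := hblkM n hne hn
        have hF := ((hrecE n hne).mp (hrec n hn)).1
        rw [hb.2, hF]
        have hcn := hc n hn
        field_simp
        ring
      · by_cases h1K : n + 1 ≤ K
        · have hne1 : Even (n+1) := by
            obtain ⟨k, hk⟩ := Int.not_even_iff_odd.mp hne; exact ⟨k+1, by omega⟩
          have hb := hblkM (n+1) hne1 h1K
          have h := hb.1
          rw [show (n+1-1 : ℤ) = n from by omega] at h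
          have hr := (hrecE (n+1) hne1).mp (hrec (n+1) h1K)
          rw [show (n+1-1 : ℤ) = n from by omega] at hr
          rw [h, hr.1, hr.2]
          have hcn := hc (n+1) h1K
          have hu := huni (n+1) h1K
          field_simp
          linear_combination f (n+1) * hu
        · have hnK : n = K := by omega
          subst hnK
          have h := (hModd hne).2 f
          rw [h, hbO hne]
          linear_combination z * g n * hαu
    · -- L g n = f n
      intro n hn
      by_cases hne : Even n
      · by_cases h1K : n + 1 ≤ K
        · have hno1 : Odd (n+1) := by
            obtain ⟨k, hk⟩ := hne; exact ⟨k, by omega⟩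
          have hb := hblkL (n+1) hno1 h1K
          have h := hb.1
          rw [show (n+1-1 : ℤ) = n from by omega] at h
          have hno1' : ¬ Even (n+1) := Int.not_even_iff_odd.mpr hno1
          have hr := (hrecO (n+1) hno1').mp (hrec (n+1) h1K)
          rw [show (n+1-1 : ℤ) = n from by omega] at hr
          rw [h, hr.1, hr.2]
          have hcn := hc (n+1) h1K
          have hu := huni (n+1) h1K
          field_simp
          linear_combination g (n+1) * hu
        · have hnK : n = K := by omega
          have hK : Even K := by rw [← hnK]; exact hne
          have h := (hLeven hK).2 g
          rw [← hnK] at h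
          rw [h, hnK, hbE hK]
      · have hno := Int.not_even_iff_odd.mp hne
        have hb := hblkL n hno hn
        have hG := ((hrecO n hne).mp (hrec n hn)).2
        rw [hb.2, hG]
        have hcn := hc n hn
        field_simp
        ring
end
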